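/- Fix a continuous function B : [0,∞) → ℝ with B(0) = 0, parameters a ∈ ℝ, σ > 0 and an initial value Y₀ > 0. Let 0 < k₁ < k₂ and let Y₁ and Y₂ be stopped solutions with parameters k₁ and k₂ respectively (driven by the same B and starting from the same Y₀), and let τ₂ = inf{t ≥ 0 : Y₂(t) = 0}. Then Y₁(t) ≤ Y₂(t) for all t ≥ 0, and the inequality is strict for all t ∈ (0, τ₂). -/

import Mathlib

open scoped ENNReal

/-- The first zero-hitting time `τ = inf{t ≥ 0 : Y t = 0}` of a path `Y`, as an extended
nonnegative real (with `τ = ∞` if `Y` never vanishes on `[0,∞)`). -/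
noncomputable def zeroHitTime (Y : ℝ → ℝ) : ℝ≥0∞ :=
  ⨅ t ∈ {t : ℝ | 0 ≤ t ∧ Y t = 0}, ENNReal.ofReal t

/-- A stopped solution of `dY = (1/2)(k/Y − aY) dt + (σ/2) dB`, `Y 0 = Y₀`, driven by the
path `B`: a continuous function on `[0,∞)` satisfying the integral equation before its
first zero-hitting time `τ` and vanishing from `τ` onwards. -/
def IsStoppedSolution (B : ℝ → ℝ) (k a σ Y₀ : ℝ) (Y : ℝ → ℝ) : Prop :=
  ContinuousOn Y (Set.Ici 0) ∧ Y 0 = Y₀ ∧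
  (∀ t : ℝ, 0 ≤ t → ENNReal.ofReal t < zeroHitTime Y →
    Y t = Y₀ + (1 / 2) * (∫ s in (0:ℝ)..t, (k / Y s - a * Y s)) + (σ / 2) * B t) ∧
  (∀ t : ℝ, 0 ≤ t → zeroHitTime Y ≤ ENNReal.ofReal t → Y t = 0)

/-!
The noise enters both equations additively and identically, so the difference `D = Y₂ - Y₁` is
differentiable before both hitting times, with derivative half the difference of the drifts.
At a zero of `D` the two paths agree and the drifts differ by `(k₂ - k₁) / Y₂ > 0`, so `D`, which
starts at `0`, can never come back to `0`: `Y₁ < Y₂` on `(0, τ₁ ∧ τ₂)`. By continuity `Y₁` then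
hits zero no later than `Y₂`, which settles all times.
-/

open Set intervalIntegral

section ZeroHitTime

variable {Y : ℝ → ℝ}

lemma zeroHitTime_le_ofReal {s : ℝ} (hs : 0 ≤ s) (h : Y s = 0) :
    zeroHitTime Y ≤ ENNReal.ofReal s :=
  iInf₂_le s ⟨hs, h⟩

lemma pos_of_ofReal_lt_zeroHitTime (hY : ContinuousOn Y (Ici 0)) (h0 : 0 < Y 0) {s : ℝ}
    (hs : 0 ≤ s) (hsτ : ENNReal.ofReal s < zeroHitTime Y) : 0 < Y s := by
  by_contra! hneg
  obtain ⟨u, hu, hYu⟩ : ∃ u ∈ Icc 0 s, Y u = 0 :=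
    intermediate_value_Icc' hs (hY.mono Icc_subset_Ici_self) ⟨hneg, h0.le⟩
  exact (zeroHitTime_le_ofReal hu.1 hYu).not_gt ((ENNReal.ofReal_le_ofReal hu.2).trans_lt hsτ)

lemma exists_zeroHitTime_eq_ofReal (hY : ContinuousOn Y (Ici 0)) (hτ : zeroHitTime Y ≠ ⊤) :
    ∃ τ, 0 ≤ τ ∧ Y τ = 0 ∧ zeroHitTime Y = ENNReal.ofReal τ := by
  set S := {t : ℝ | 0 ≤ t ∧ Y t = 0}
  have hS : S.Nonempty := by
    by_contra! hS
    exact hτ (iInf₂_eq_top.2 fun t ht => (hS.subset ht).elim)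
  have hSc : IsClosed S := hY.preimage_isClosed_of_isClosed isClosed_Ici isClosed_singleton
  have hSb : BddBelow S := ⟨0, fun t ht => ht.1⟩
  obtain ⟨h0, hY0⟩ := hSc.csInf_mem hS hSb
  exact ⟨sInf S, h0, hY0, le_antisymm (zeroHitTime_le_ofReal h0 hY0)
    (le_iInf₂ fun t ht => ENNReal.ofReal_le_ofReal (csInf_le hSb ht))⟩

end ZeroHitTime

lemma pos_of_hasDerivWithinAt_of_deriv_pos_of_eq_zero {f f' : ℝ → ℝ} {a b : ℝ}
    (hf : ∀ x ∈ Icc a b, HasDerivWithinAt f (f' x) (Icc a b) x) (ha : 0 ≤ f a)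
    (hzero : ∀ x ∈ Icc a b, f x = 0 → 0 < f' x) : ∀ x ∈ Ioc a b, 0 < f x := by
  have hnonneg : ∀ x ∈ Icc a b, 0 ≤ f x := by
    have hneg := image_le_of_deriv_right_lt_deriv_boundary' (f := fun x => -f x)
      (f' := fun x => -f' x) (B := 0) (B' := 0)
      (fun x hx => (hf x hx).continuousWithinAt.neg)
      (fun x hx => ((hf x (Ico_subset_Icc_self hx)).mono_of_mem_nhdsWithin
        (Icc_mem_nhdsGE_of_mem hx)).neg)
      (by simpa using ha) continuousOn_const (fun _ _ => hasDerivWithinAt_const _ _ _)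
      (fun x hx hfx => by simpa using hzero x (Ico_subset_Icc_self hx) (by simpa using hfx))
    exact fun x hx => by simpa using hneg hx
  intro x hx
  refine (hnonneg x (Ioc_subset_Icc_self hx)).lt_of_ne' fun hfx => ?_
  -- `x` minimises `f` on `[a, x]`, so the derivative there, taken from the left, is `≤ 0`.
  have hmin : IsMinOn f (Icc a x) x := fun y hy => by
    simpa [hfx] using hnonneg y ⟨hy.1, hy.2.trans hx.2⟩
  have hcone : a - x ∈ posTangentConeAt (Icc a x) x :=
    sub_mem_posTangentConeAt_of_segment_subset (by rw [segment_symm, segment_eq_Icc hx.1.le])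
  have hderiv := hmin.localize.hasFDerivWithinAt_nonneg
    ((hf x (Ioc_subset_Icc_self hx)).mono (Icc_subset_Icc_right hx.2)) hcone
  simp only [ContinuousLinearMap.toSpanSingleton_apply, smul_eq_mul] at hderiv
  nlinarith [hzero x (Ioc_subset_Icc_self hx) hfx, hx.1]

lemma hasDerivWithinAt_integral_Icc {E : Type*} [NormedAddCommGroup E] [NormedSpace ℝ E]
    [CompleteSpace E] {g : ℝ → E} {a b x : ℝ} (hg : ContinuousOn g (Icc a b))
    (hx : x ∈ Icc a b) : HasDerivWithinAt (fun u => ∫ s in a..u, g s) (g x) (Icc a b) x := by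
  have : Fact (x ∈ Icc a b) := ⟨hx⟩
  refine integral_hasDerivWithinAt_right ?_ (hg.stronglyMeasurableAtFilter_nhdsWithin
    measurableSet_Icc x) (hg x hx)
  exact (hg.mono (by rw [uIcc_of_le hx.1]; exact Icc_subset_Icc_right hx.2)).intervalIntegrable

namespace IsStoppedSolution

variable {B : ℝ → ℝ} {k k₁ k₂ a σ Y₀ : ℝ} {Y Y₁ Y₂ : ℝ → ℝ}

lemma pos (h : IsStoppedSolution B k a σ Y₀ Y) (hY₀ : 0 < Y₀) {t : ℝ} (ht : 0 ≤ t)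
    (htτ : ENNReal.ofReal t < zeroHitTime Y) : 0 < Y t :=
  pos_of_ofReal_lt_zeroHitTime h.1 (h.2.1 ▸ hY₀) ht htτ

lemma hasDerivWithinAt_sub_noise (h : IsStoppedSolution B k a σ Y₀ Y) (hY₀ : 0 < Y₀) {t : ℝ}
    (htτ : ENNReal.ofReal t < zeroHitTime Y) {x : ℝ} (hx : x ∈ Icc 0 t) :
    HasDerivWithinAt (fun s => Y s - σ / 2 * B s) (1 / 2 * (k / Y x - a * Y x)) (Icc 0 t) x := by
  have hsτ : ∀ s ∈ Icc 0 t, ENNReal.ofReal s < zeroHitTime Y := fun s hs =>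
    (ENNReal.ofReal_le_ofReal hs.2).trans_lt htτ
  have hYc : ContinuousOn Y (Icc 0 t) := h.1.mono Icc_subset_Ici_self
  have hdrift : ContinuousOn (fun s => k / Y s - a * Y s) (Icc 0 t) :=
    (continuousOn_const.div hYc fun s hs => (h.pos hY₀ hs.1 (hsτ s hs)).ne').sub
      (continuousOn_const.mul hYc)
  refine (((hasDerivWithinAt_integral_Icc hdrift hx).const_mul (1 / 2)).const_add Y₀).congr_of_mem
    (fun s hs => ?_) hx
  rw [h.2.2.1 s hs.1 (hsτ s hs)]
  ring

lemma lt_of_ofReal_lt_zeroHitTime (h₁ : IsStoppedSolution B k₁ a σ Y₀ Y₁)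
    (h₂ : IsStoppedSolution B k₂ a σ Y₀ Y₂) (hY₀ : 0 < Y₀) (hk : k₁ < k₂) {t : ℝ} (ht : 0 < t)
    (ht₁ : ENNReal.ofReal t < zeroHitTime Y₁) (ht₂ : ENNReal.ofReal t < zeroHitTime Y₂) :
    Y₁ t < Y₂ t := by
  have hD : ∀ x ∈ Icc 0 t, HasDerivWithinAt (fun s => Y₂ s - Y₁ s)
      (1 / 2 * (k₂ / Y₂ x - a * Y₂ x) - 1 / 2 * (k₁ / Y₁ x - a * Y₁ x)) (Icc 0 t) x :=
    fun x hx => by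
      simpa only [Pi.sub_def, sub_sub_sub_cancel_right] using
        (h₂.hasDerivWithinAt_sub_noise hY₀ ht₂ hx).sub
        (h₁.hasDerivWithinAt_sub_noise hY₀ ht₁ hx)
  have hzero : ∀ x ∈ Icc 0 t, Y₂ x - Y₁ x = 0 →
      0 < 1 / 2 * (k₂ / Y₂ x - a * Y₂ x) - 1 / 2 * (k₁ / Y₁ x - a * Y₁ x) := by
    intro x hx hx0
    rw [← sub_eq_zero.1 hx0]
    have hY₂x := h₂.pos hY₀ hx.1 ((ENNReal.ofReal_le_ofReal hx.2).trans_lt ht₂)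
    linarith [div_lt_div_of_pos_right hk hY₂x]
  have hDt := pos_of_hasDerivWithinAt_of_deriv_pos_of_eq_zero hD (by simp [h₁.2.1, h₂.2.1])
    hzero t ⟨ht, le_rfl⟩
  linarith

lemma zeroHitTime_le (h₁ : IsStoppedSolution B k₁ a σ Y₀ Y₁)
    (h₂ : IsStoppedSolution B k₂ a σ Y₀ Y₂) (hY₀ : 0 < Y₀) (hk : k₁ < k₂) :
    zeroHitTime Y₁ ≤ zeroHitTime Y₂ := by
  obtain hτ | hτ := eq_or_ne (zeroHitTime Y₂) ⊤
  · simp [hτ]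
  obtain ⟨τ, hτ0, hYτ, hτeq⟩ := exists_zeroHitTime_eq_ofReal h₂.1 hτ
  rw [hτeq]
  by_contra! hlt
  have hτpos : 0 < τ := hτ0.lt_of_ne (by rintro rfl; linarith [h₂.2.1])
  have hIoo : Ioo 0 τ ⊆ Ici 0 := fun s hs => hs.1.le
  have hle : Y₁ τ ≤ Y₂ τ :=
    ContinuousWithinAt.closure_le (by rw [closure_Ioo hτpos.ne]; exact right_mem_Icc.2 hτ0)
      ((h₁.1 τ hτ0).mono hIoo) ((h₂.1 τ hτ0).mono hIoo) fun s hs =>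
      have hsτ := (ENNReal.ofReal_lt_ofReal_iff hτpos).2 hs.2
      (h₁.lt_of_ofReal_lt_zeroHitTime h₂ hY₀ hk hs.1 (hsτ.trans hlt) (hτeq ▸ hsτ)).le
  linarith [h₁.pos hY₀ hτ0 hlt]

end IsStoppedSolution

theorem fCIR_trajectory_comparison (B : ℝ → ℝ)
    (a σ Y₀ k₁ k₂ : ℝ) (hY₀ : 0 < Y₀) (hk : k₁ < k₂)
    (Y₁ Y₂ : ℝ → ℝ)
    (h₁ : IsStoppedSolution B k₁ a σ Y₀ Y₁) (h₂ : IsStoppedSolution B k₂ a σ Y₀ Y₂) :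
    (∀ t : ℝ, 0 ≤ t → Y₁ t ≤ Y₂ t) ∧
    (∀ t : ℝ, 0 < t → ENNReal.ofReal t < zeroHitTime Y₂ → Y₁ t < Y₂ t) := by
  have hstrict : ∀ t : ℝ, 0 < t → ENNReal.ofReal t < zeroHitTime Y₂ → Y₁ t < Y₂ t := by
    intro t ht ht₂
    by_cases ht₁ : ENNReal.ofReal t < zeroHitTime Y₁
    · exact h₁.lt_of_ofReal_lt_zeroHitTime h₂ hY₀ hk ht ht₁ ht₂
    · rw [h₁.2.2.2 t ht.le (not_lt.1 ht₁)]
      exact h₂.pos hY₀ ht.le ht₂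
  refine ⟨fun t ht => ?_, hstrict⟩
  obtain rfl | ht := ht.eq_or_lt
  · rw [h₁.2.1, h₂.2.1]
  by_cases ht₂ : ENNReal.ofReal t < zeroHitTime Y₂
  · exact (hstrict t ht ht₂).le
  · have hτ₂ := not_lt.1 ht₂
    rw [h₁.2.2.2 t ht.le ((h₁.zeroHitTime_le h₂ hY₀ hk).trans hτ₂), h₂.2.2.2 t ht.le hτ₂]
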